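/- Let 1/2 < c ≤ 1 and K ≥ 0 be constants, and let G be a simple graph on n vertices whose degree sequence d satisfies d(i) ≥ (2c−1)i − K for all 1 ≤ i ≤ n (in increasing order). If (2c−1)n − K − 2 ≥ 0, then the matching number satisfies ν(G) ≥ ((2c−1)/(2c)) · (n − 1 − (K+1)/(2c−1)). -/

import Mathlib

/-- A finset of edges of `G` that are pairwise vertex-disjoint, i.e. a matching. -/
def IsMatchingFinset {V : Type*} (G : SimpleGraph V) (M : Finset (Sym2 V)) : Prop :=
  ↑M ⊆ G.edgeSet ∧ (M : Set (Sym2 V)).Pairwise fun e f => ∀ v, v ∈ e → v ∉ f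

/-!
Write `a = 2c − 1` and induct on the matching number. If some vertex is covered by every maximum
matching, deleting its edges lowers `ν` by one and weakens the degree condition only by `1 + a`,
which the bound absorbs. Otherwise, by Gallai's lemma, a maximum matching misses at most one vertex
per component. A vertex has degree less than the size of its component, so the degree condition,
applied to unions of the components of the `n − 2ν` unmatched vertices and peeling off the largest
component each time, gives `(1 + a)(n − 2ν) ≤ (1 − a) n + 2(K + a + 1)`.
-/

open Finset

theorem one_add_mul_card_le_of_forall_subset {ι : Type*} [DecidableEq ι] {a K : ℝ}
    (ha : 0 ≤ a) (hK : 0 ≤ K) (U : Finset ι) (s : ι → ℝ) (hs : ∀ u ∈ U, 1 ≤ s u)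
    (hpeel : ∀ A ⊆ U, A.Nonempty → ∃ u ∈ A, a * ∑ x ∈ A, s x - K ≤ s u - 1) :
    (1 + a) * #U ≤ (1 - a) * ∑ u ∈ U, s u + 2 * (K + a + 1) := by
  induction U using Finset.induction_on_max_value s with
  | empty => simp only [card_empty, CharP.cast_eq_zero, mul_zero, sum_empty, zero_add]; positivity
  | insert u U hu hmax ih =>
    have ih := ih (fun x hx => hs x (mem_insert_of_mem hx))
      (fun A hA => hpeel A (hA.trans (subset_insert _ _)))
    obtain ⟨w, hw, hpw⟩ := hpeel (insert u U) Subset.rfl (insert_nonempty _ _)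
    have hwu : s w ≤ s u := by
      rcases mem_insert.1 hw with rfl | hw
      exacts [le_rfl, hmax w hw]
    have hcard : (#U : ℝ) ≤ ∑ x ∈ U, s x := by
      simpa using card_nsmul_le_sum U s 1 (fun x hx => hs x (mem_insert_of_mem hx))
    rw [sum_insert hu] at hpw ⊢
    rw [card_insert_of_notMem hu, Nat.cast_succ]
    -- Either the largest term `s u` is small and the peeling inequality for the whole family
    -- suffices, or it is large enough to pay for its own slot on the left.
    by_cases hsmall : (1 - a) * s u ≤ 1 + a
    · nlinarith [mul_le_mul_of_nonneg_left hcard (by linarith : (0 : ℝ) ≤ 1 + a)]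
    · linarith

theorem Finset.exists_mem_notMem_ne_of_card_le {α : Type*} [DecidableEq α] {A B : Finset α}
    (hAB : #B ≤ #A) {t u v : α} (ht : t ∈ A) (hu : u ∈ B) (hv : v ∈ B) (huv : u ≠ v)
    (huA : u ∉ A) (hvA : v ∉ A) : ∃ x ∈ A, x ∉ B ∧ x ≠ t := by
  by_contra! h
  have hsub : insert u (insert v (A.erase t)) ⊆ B := by
    refine insert_subset hu (insert_subset hv fun x hx => ?_)
    by_contra hxB
    exact (ne_of_mem_erase hx) (h x (mem_of_mem_erase hx) hxB)
  have hcard := card_le_card hsub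
  rw [card_insert_of_notMem (by simp [huv, huA]), card_insert_of_notMem (by simp [hvA]),
    card_erase_of_mem ht] at hcard
  have := card_pos.2 ⟨t, ht⟩
  omega

section

variable {V : Type*} {G : SimpleGraph V} {M N : Finset (Sym2 V)} {a K : ℝ}

theorem isMatchingFinset_empty (G : SimpleGraph V) : IsMatchingFinset G ∅ := by
  simp [IsMatchingFinset]

namespace IsMatchingFinset

theorem subset (hM : IsMatchingFinset G M) (h : N ⊆ M) : IsMatchingFinset G N :=
  ⟨(coe_subset.2 h).trans hM.1, hM.2.mono (coe_subset.2 h)⟩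

theorem eq_of_mem (hM : IsMatchingFinset G M) {e f : Sym2 V} {v : V} (he : e ∈ M) (hf : f ∈ M)
    (hve : v ∈ e) (hvf : v ∈ f) : e = f := by
  by_contra hne
  exact hM.2 he hf hne v hve hvf

end IsMatchingFinset

def IsMaximumMatchingFinset (G : SimpleGraph V) (M : Finset (Sym2 V)) : Prop :=
  IsMatchingFinset G M ∧ ∀ N, IsMatchingFinset G N → #N ≤ #M

theorem exists_isMaximumMatchingFinset [Fintype V] (G : SimpleGraph V) :
    ∃ M, IsMaximumMatchingFinset G M := by
  classical
  obtain ⟨M, hM, hmax⟩ := exists_max_image {M : Finset (Sym2 V) | IsMatchingFinset G M} card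
    ⟨∅, by simpa using isMatchingFinset_empty G⟩
  exact ⟨M, (mem_filter.1 hM).2, fun N hN => hmax N (by simpa using hN)⟩

/-- For the degree sequence `d(1) ≤ … ≤ d(n)` of `G` this says `d(i) ≥ a * i - K` for all `i`. -/
def LinearDegreeCondition [Fintype V] (G : SimpleGraph V) [DecidableRel G.Adj] (a K : ℝ) :
    Prop :=
  ∀ s : Finset V, s.Nonempty → ∃ w ∈ s, a * #s - K ≤ G.degree w

theorem linearDegreeCondition_of_equiv [Fintype V] [DecidableRel G.Adj] (ha : 0 ≤ a) {n : ℕ}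
    (e : Fin n ≃ V) (hdeg : ∀ i : Fin n, a * ((i : ℝ) + 1) - K ≤ G.degree (e i)) :
    LinearDegreeCondition G a K := by
  intro s hs
  obtain ⟨w, hws, hmax⟩ := exists_max_image s (fun w => (e.symm w : ℕ)) hs
  have hcard : #s ≤ (e.symm w : ℕ) + 1 := by
    simpa using card_le_card_of_injOn (fun w => (e.symm w : ℕ))
      (t := range ((e.symm w : ℕ) + 1)) (fun x hx => mem_range_succ_iff.2 (hmax x hx))
      (fun x _ y _ h => e.symm.injective (Fin.ext h))
  have hw := hdeg (e.symm w)
  rw [e.apply_symm_apply] at hw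
  refine ⟨w, hws, le_trans ?_ hw⟩
  gcongr
  exact_mod_cast hcard

variable [DecidableEq V]

def matchedVerts (M : Finset (Sym2 V)) : Finset V := M.biUnion Sym2.toFinset

theorem mem_matchedVerts {v : V} : v ∈ matchedVerts M ↔ ∃ e ∈ M, v ∈ e := by
  simp [matchedVerts, Sym2.mem_toFinset]

theorem matchedVerts_mono (h : N ⊆ M) : matchedVerts N ⊆ matchedVerts M :=
  biUnion_subset_biUnion_of_subset_left _ h

theorem matchedVerts_insert (e : Sym2 V) (M : Finset (Sym2 V)) :
    matchedVerts (insert e M) = e.toFinset ∪ matchedVerts M :=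
  biUnion_insert

theorem notMem_of_notMem_matchedVerts {v : V} {e : Sym2 V} (hv : v ∉ matchedVerts M)
    (hve : v ∈ e) : e ∉ M :=
  fun he => hv (mem_matchedVerts.2 ⟨e, he, hve⟩)

namespace IsMatchingFinset

theorem insert (hM : IsMatchingFinset G M) {e : Sym2 V} (he : e ∈ G.edgeSet)
    (hfree : ∀ v ∈ e, v ∉ matchedVerts M) : IsMatchingFinset G (insert e M) := by
  have hdisj : ∀ f ∈ M, ∀ v ∈ e, v ∉ f := fun f hf v hve hvf =>
    hfree v hve (mem_matchedVerts.2 ⟨f, hf, hvf⟩)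
  refine ⟨?_, ?_⟩
  · rw [coe_insert]
    exact Set.insert_subset he hM.1
  · rw [coe_insert]
    exact hM.2.insert fun f hf _ => ⟨hdisj f hf, fun v hvf hve => hdisj f hf v hve hvf⟩

theorem card_matchedVerts (hM : IsMatchingFinset G M) : #(matchedVerts M) = 2 * #M := by
  rw [matchedVerts, card_biUnion, sum_congr rfl fun e he =>
    Sym2.card_toFinset_of_not_isDiag e (G.not_isDiag_of_mem_edgeSet (hM.1 he)), sum_const,
    smul_eq_mul, mul_comm]
  intro e he f hf hef
  simp only [Function.onFun, disjoint_left, Sym2.mem_toFinset]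
  exact hM.2 he hf hef

end IsMatchingFinset

namespace IsMaximumMatchingFinset

theorem not_adj (hM : IsMaximumMatchingFinset G M) {u v : V} (hu : u ∉ matchedVerts M)
    (hv : v ∉ matchedVerts M) : ¬ G.Adj u v := by
  intro huv
  have hfree : ∀ w ∈ s(u, v), w ∉ matchedVerts M := by
    simp only [Sym2.mem_iff]
    rintro w (rfl | rfl) <;> assumption
  have hcard := hM.2 _ (hM.1.insert huv hfree)
  rw [card_insert_of_notMem (notMem_of_notMem_matchedVerts hu (Sym2.mem_mk_left u v))] at hcard
  omega

/-- Trading the edge of `N` at `y` for the edge `xy` of `M` keeps `N` maximum and makes it share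
one more edge with `M`. -/
theorem exists_exchange (hN : IsMaximumMatchingFinset G N) (hM : IsMatchingFinset G M)
    {x y : V} (hxy : s(x, y) ∈ M) (hx : x ∉ matchedVerts N) :
    ∃ N', IsMaximumMatchingFinset G N' ∧ matchedVerts N' ⊆ insert x (matchedVerts N) ∧
      #(M ∩ N) < #(M ∩ N') := by
  have hadj : G.Adj x y := hM.1 hxy
  have hy : y ∈ matchedVerts N := by
    by_contra hy
    exact hN.not_adj hx hy hadj
  obtain ⟨f, hfN, hyf⟩ := mem_matchedVerts.1 hy
  have hxyN : s(x, y) ∉ N := notMem_of_notMem_matchedVerts hx (Sym2.mem_mk_left x y)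
  have hfM : f ∉ M := fun hfM => hxyN (hM.eq_of_mem hxy hfM (Sym2.mem_mk_right x y) hyf ▸ hfN)
  have hfree : ∀ w ∈ s(x, y), w ∉ matchedVerts (N.erase f) := by
    simp only [Sym2.mem_iff, mem_matchedVerts]
    rintro w (rfl | rfl) ⟨g, hg, hwg⟩
    · exact hx (mem_matchedVerts.2 ⟨g, mem_of_mem_erase hg, hwg⟩)
    · exact ne_of_mem_erase hg (hN.1.eq_of_mem (mem_of_mem_erase hg) hfN hwg hyf)
  have hcard : #(insert s(x, y) (N.erase f)) = #N := by
    rw [card_insert_of_notMem fun h => hxyN (mem_of_mem_erase h), card_erase_add_one hfN]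
  refine ⟨insert s(x, y) (N.erase f),
    ⟨(hN.1.subset (erase_subset f N)).insert hadj hfree, fun N' hN' => hcard ▸ hN.2 N' hN'⟩,
    ?_, card_lt_card ⟨?_, ?_⟩⟩
  · rw [matchedVerts_insert, Sym2.toFinset_mk_eq]
    intro w hw
    simp only [mem_union, mem_insert, mem_singleton] at hw
    rcases hw with (rfl | rfl) | hw
    · exact mem_insert_self _ _
    · exact mem_insert_of_mem hy
    · exact mem_insert_of_mem (matchedVerts_mono (erase_subset f N) hw)
  · intro g hg
    obtain ⟨hgM, hgN⟩ := mem_inter.1 hg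
    exact mem_inter.2 ⟨hgM, mem_insert_of_mem (mem_erase.2 ⟨fun h => hfM (h ▸ hgM), hgN⟩)⟩
  · intro h
    exact hxyN (mem_inter.1 (h (mem_inter.2 ⟨hxy, mem_insert_self _ _⟩))).2

theorem card_lt_of_deleteIncidenceSet {v : V}
    (hv : ∀ N, IsMaximumMatchingFinset G N → v ∈ matchedVerts N)
    (hM : IsMaximumMatchingFinset G M) {M' : Finset (Sym2 V)}
    (hM' : IsMatchingFinset (G.deleteIncidenceSet v) M') : #M' < #M := by
  have hM'G : IsMatchingFinset G M' :=
    ⟨hM'.1.trans (SimpleGraph.edgeSet_mono (G.deleteIncidenceSet_le v)), hM'.2⟩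
  have hvM' : v ∉ matchedVerts M' := fun h => by
    obtain ⟨e, he, hve⟩ := mem_matchedVerts.1 h
    have := hM'.1 he
    rw [SimpleGraph.edgeSet_deleteIncidenceSet] at this
    exact this.2 ⟨this.1, hve⟩
  by_contra! hle
  exact hvM' (hv M' ⟨hM'G, fun N hN => (hM.2 N hN).trans hle⟩)

end IsMaximumMatchingFinset

variable [Fintype V]

theorem IsMatchingFinset.card_compl_matchedVerts (hM : IsMatchingFinset G M) :
    #(matchedVerts M)ᶜ = Fintype.card V - 2 * #M := by
  rw [card_compl, hM.card_matchedVerts]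

/-- Gallai's lemma. -/
theorem IsMaximumMatchingFinset.not_reachable_of_notMem_matchedVerts
    (hcrit : ∀ w, ∃ N, IsMaximumMatchingFinset G N ∧ w ∉ matchedVerts N)
    (hM : IsMaximumMatchingFinset G M) {u v : V} (hu : u ∉ matchedVerts M)
    (hv : v ∉ matchedVerts M) (huv : u ≠ v) : ¬ G.Reachable u v := by
  classical
  intro hr
  induction hd : G.dist u v using Nat.strong_induction_on generalizing M u v with
  | _ d ih =>
  obtain ⟨p, hp⟩ := hr.exists_walk_length_eq_dist
  cases p with
  | nil => exact huv rfl
  | @cons _ t _ hut q =>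
  have htM : t ∈ matchedVerts M := by
    by_contra htM
    exact hM.not_adj hu htM hut
  have htv : t ≠ v := fun h => hv (h ▸ htM)
  have hdist : G.dist t v < d := by
    have := SimpleGraph.dist_le q
    simp only [SimpleGraph.Walk.length_cons] at hp
    omega
  -- Among the maximum matchings missing `t`, take one sharing as many edges with `M` as possible.
  obtain ⟨N₀, hN₀⟩ := hcrit t
  obtain ⟨N, hNmem, hbest⟩ := exists_max_image
    {N : Finset (Sym2 V) | IsMaximumMatchingFinset G N ∧ t ∉ matchedVerts N} (fun N => #(M ∩ N))
    ⟨N₀, by simpa using hN₀⟩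
  obtain ⟨hN, htN⟩ := (mem_filter.1 hNmem).2
  have huN : u ∈ matchedVerts N := by
    by_contra huN
    exact hN.not_adj huN htN hut
  have hvN : v ∈ matchedVerts N := by
    by_contra hvN
    exact ih _ hdist hN htN hvN htv q.reachable rfl
  have hcardMN : #M = #N := le_antisymm (hN.2 M hM.1) (hM.2 N hN.1)
  obtain ⟨x, hxN, hxM, hxt⟩ := Finset.exists_mem_notMem_ne_of_card_le
    (A := (matchedVerts N)ᶜ) (B := (matchedVerts M)ᶜ)
    (by rw [hM.1.card_compl_matchedVerts, hN.1.card_compl_matchedVerts, hcardMN])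
    (mem_compl.2 htN) (mem_compl.2 hu) (mem_compl.2 hv) huv
    (by simpa using huN) (by simpa using hvN)
  obtain ⟨e, he, hxe⟩ := mem_matchedVerts.1 (by simpa using hxM)
  obtain ⟨y, rfl⟩ := Sym2.mem_iff_exists.1 hxe
  obtain ⟨N', hN', hsub, hlt⟩ := hN.exists_exchange hM.1 he (by simpa using hxN)
  have htN' : t ∉ matchedVerts N' := fun h =>
    (mem_insert.1 (hsub h)).elim (fun h => hxt h.symm) htN
  exact (hbest N' (by simp [hN', htN'])).not_gt hlt

namespace SimpleGraph

variable (G) [DecidableRel G.Adj]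

theorem degree_lt_card_filter_reachable {u w : V} (h : G.Reachable u w) :
    G.degree w < #{x | G.Reachable u x} := by
  refine (card_le_card fun x hx => ?_).trans_lt
    (card_erase_lt_of_mem (s := {x | G.Reachable u x}) (mem_filter.2 ⟨mem_univ w, h⟩))
  have hwx : G.Adj w x := (mem_neighborFinset G w x).1 hx
  exact mem_erase.2 ⟨hwx.ne', mem_filter.2 ⟨mem_univ x, h.trans hwx.reachable⟩⟩

theorem degree_le_degree_deleteIncidenceSet_add_one {v w : V} (hwv : w ≠ v) :
    G.degree w ≤ (G.deleteIncidenceSet v).degree w + 1 := by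
  refine (card_le_card fun x hx => ?_).trans (card_insert_le v _)
  have hwx : G.Adj w x := (mem_neighborFinset G w x).1 hx
  by_cases hxv : x = v
  · exact hxv ▸ mem_insert_self _ _
  · exact mem_insert_of_mem ((mem_neighborFinset _ w x).2
      (deleteIncidenceSet_adj.2 ⟨hwx, hwv, hxv⟩))

end SimpleGraph

theorem LinearDegreeCondition.deleteIncidenceSet [DecidableRel G.Adj]
    (hG : LinearDegreeCondition G a K) (ha : 0 ≤ a) (hK : 0 ≤ K) (v : V) :
    LinearDegreeCondition (G.deleteIncidenceSet v) a (K + 1 + a) := by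
  intro s hs
  rcases (s.erase v).eq_empty_or_nonempty with hempty | hne
  · obtain ⟨w, hw⟩ := hs
    have hcard : (#s : ℝ) ≤ 1 := by
      have := pred_card_le_card_erase (s := s) (a := v)
      rw [hempty, card_empty] at this
      exact_mod_cast (by omega : #s ≤ 1)
    refine ⟨w, hw, ?_⟩
    nlinarith [(Nat.cast_nonneg _ : (0 : ℝ) ≤ (G.deleteIncidenceSet v).degree w)]
  · obtain ⟨w, hw, hdeg⟩ := hG _ hne
    have hcard : (#s : ℝ) ≤ #(s.erase v) + 1 := by
      have := pred_card_le_card_erase (s := s) (a := v)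
      exact_mod_cast (by omega : #s ≤ #(s.erase v) + 1)
    have hdel : (G.degree w : ℝ) ≤ (G.deleteIncidenceSet v).degree w + 1 := by
      exact_mod_cast G.degree_le_degree_deleteIncidenceSet_add_one (ne_of_mem_erase hw)
    exact ⟨w, mem_of_mem_erase hw, by nlinarith⟩

theorem LinearDegreeCondition.le_card_of_forall_exists_notMem [DecidableRel G.Adj]
    (hG : LinearDegreeCondition G a K) (ha : 0 ≤ a) (ha1 : a ≤ 1) (hK : 0 ≤ K)
    (hcrit : ∀ w, ∃ N, IsMaximumMatchingFinset G N ∧ w ∉ matchedVerts N)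
    (hM : IsMaximumMatchingFinset G M) :
    a * (Fintype.card V - 1) - (K + 1) ≤ (1 + a) * #M := by
  set U := (matchedVerts M)ᶜ
  let R : V → Finset V := fun u => {x | G.Reachable u x}
  have hself : ∀ u, u ∈ R u := fun u => mem_filter.2 ⟨mem_univ u, .rfl⟩
  have hdisj : (U : Set V).PairwiseDisjoint R := by
    intro u hu u' hu' huu'
    refine disjoint_left.2 fun w hw hw' => ?_
    exact hM.not_reachable_of_notMem_matchedVerts hcrit (by simpa [U] using hu)
      (by simpa [U] using hu') huu' ((mem_filter.1 hw).2.trans (mem_filter.1 hw').2.symm)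
  -- A vertex of a union of components has its neighbours inside its own component.
  have hpeel : ∀ A ⊆ U, A.Nonempty →
      ∃ u ∈ A, a * ∑ x ∈ A, (#(R x) : ℝ) - K ≤ #(R u) - 1 := by
    intro A hA ⟨u₁, hu₁⟩
    obtain ⟨w, hw, hdeg⟩ := hG (A.biUnion R) ⟨u₁, mem_biUnion.2 ⟨u₁, hu₁, hself u₁⟩⟩
    obtain ⟨u, hu, hwu⟩ := mem_biUnion.1 hw
    have hlt : (G.degree w : ℝ) + 1 ≤ #(R u) := by
      exact_mod_cast G.degree_lt_card_filter_reachable (mem_filter.1 hwu).2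
    rw [card_biUnion (hdisj.subset hA), Nat.cast_sum] at hdeg
    exact ⟨u, hu, by linarith⟩
  have hbound := one_add_mul_card_le_of_forall_subset ha hK U (fun u => (#(R u) : ℝ))
    (fun u _ => by exact_mod_cast card_pos.2 ⟨u, hself u⟩) hpeel
  have hsum : ∑ u ∈ U, (#(R u) : ℝ) ≤ Fintype.card V := by
    rw [← Nat.cast_sum, ← card_biUnion hdisj]
    exact_mod_cast card_le_univ _
  have hU : (#U : ℝ) = Fintype.card V - 2 * #M := by
    have := card_le_univ (matchedVerts M)
    rw [hM.1.card_matchedVerts] at this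
    rw [hM.1.card_compl_matchedVerts, Nat.cast_sub this]
    push_cast
    ring
  rw [hU] at hbound
  nlinarith [mul_le_mul_of_nonneg_left hsum (by linarith : (0 : ℝ) ≤ 1 - a)]

theorem LinearDegreeCondition.le_card [DecidableRel G.Adj] (hG : LinearDegreeCondition G a K)
    (ha : 0 ≤ a) (ha1 : a ≤ 1) (hK : 0 ≤ K) (hM : IsMaximumMatchingFinset G M) :
    a * (Fintype.card V - 1) - (K + 1) ≤ (1 + a) * #M := by
  induction hm : #M using Nat.strong_induction_on generalizing G K M with
  | _ m ih =>
  by_cases hcrit : ∀ w, ∃ N, IsMaximumMatchingFinset G N ∧ w ∉ matchedVerts N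
  · exact hm ▸ hG.le_card_of_forall_exists_notMem ha ha1 hK hcrit hM
  push Not at hcrit
  obtain ⟨v, hv⟩ := hcrit
  obtain ⟨M', hM'⟩ := exists_isMaximumMatchingFinset (G.deleteIncidenceSet v)
  have hlt := hM.card_lt_of_deleteIncidenceSet hv hM'.1
  have hM'bound := ih _ (hm ▸ hlt) (hG.deleteIncidenceSet ha hK v) (by linarith) hM' rfl
  have : (#M' : ℝ) + 1 ≤ m := by exact_mod_cast hm ▸ hlt
  nlinarith

end

theorem linear_dpg_matching_lower_bound_general {V : Type*} [Fintype V]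
    (G : SimpleGraph V) [DecidableRel G.Adj]
    (c K : ℝ) (hc : 1 / 2 < c) (hc1 : c ≤ 1) (hK : 0 ≤ K)
    (n : ℕ)
    (e : Fin n ≃ V)
    (hdeg : ∀ i : Fin n, (2 * c - 1) * ((i : ℝ) + 1) - K ≤ (G.degree (e i) : ℝ)) :
    ∃ M : Finset (Sym2 V), IsMatchingFinset G M ∧
      ((2 * c - 1) / (2 * c)) * ((n : ℝ) - 1 - (K + 1) / (2 * c - 1)) ≤ (M.card : ℝ) := by
  classical
  obtain ⟨M, hM⟩ := exists_isMaximumMatchingFinset G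
  have hbound := (linearDegreeCondition_of_equiv (by linarith) e hdeg).le_card
    (by linarith) (by linarith) hK hM
  rw [← Fintype.card_congr e, Fintype.card_fin] at hbound
  refine ⟨M, hM.1, ?_⟩
  have h2c1 : 2 * c - 1 ≠ 0 := by linarith
  rw [show (2 * c - 1) / (2 * c) * ((n : ℝ) - 1 - (K + 1) / (2 * c - 1))
      = ((2 * c - 1) * (n - 1) - (K + 1)) / (2 * c) by field_simp, div_le_iff₀ (by linarith)]
  linarith

/-- If `1/2 < c ≤ 1`, `K ≥ 0`, and the increasing degree sequence of `G` satisfies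
`d(i) ≥ (2c−1)·i − K` for `1 ≤ i ≤ n`, and `(2c−1)·n − K − 2 ≥ 0`, then
`ν(G) ≥ ((2c−1)/(2c)) · (n − 1 − (K+1)/(2c−1))`. -/
theorem linear_dpg_matching_lower_bound {V : Type*} [Fintype V] [DecidableEq V]
    (G : SimpleGraph V) [DecidableRel G.Adj]
    (c K : ℝ) (hc : 1 / 2 < c) (hc1 : c ≤ 1) (hK : 0 ≤ K)
    (n : ℕ) (hn : n = Fintype.card V)
    (e : Fin n ≃ V) (hmono : Monotone fun i => G.degree (e i))
    (hdeg : ∀ i : Fin n, (2 * c - 1) * ((i : ℝ) + 1) - K ≤ (G.degree (e i) : ℝ))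
    (hnontriv : 0 ≤ (2 * c - 1) * (n : ℝ) - K - 2) :
    ∃ M : Finset (Sym2 V), IsMatchingFinset G M ∧
      ((2 * c - 1) / (2 * c)) * ((n : ℝ) - 1 - (K + 1) / (2 * c - 1)) ≤ (M.card : ℝ) :=
  linear_dpg_matching_lower_bound_general G c K hc hc1 hK n e hdeg
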